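/- arXiv:1704.06525 — 4 statements merged into one kernel-verified Lean document; each statement's English description precedes it below -/
import Mathlib

section
/- Let s ∈ ℂ and κ, λ, λ₀ > 0, and set τ = √(κλ₀(1+κλ)). Consider g(v) = |v − s|² + κλ|v|² + κλ₀·1{v ≠ 0} on ℂ. If |s| > τ, then g has the unique minimizer v = s/(1+κλ); if |s| < τ, then g has the unique minimizer v = 0. -/
/-!
Write `a = 1 + μ`. Completing the square gives
`‖v - s‖² + μ‖v‖² = a‖v - s/a‖² + (1 - 1/a)‖s‖²`, so on `v ≠ 0` the objective is minimised
exactly at `s/a` with value `‖s‖² - ‖s‖²/a + c`, while its value at `0` is `‖s‖²`.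
Comparing the two values, the shrunk point wins iff `c a < ‖s‖²`, i.e. iff `‖s‖` exceeds the
threshold `√(c a)`.
-/

lemma forall_le_and_eq_of_forall_ne_lt {α β : Type*} [Preorder β] {f : α → β} {x : α}
    (h : ∀ v, v ≠ x → f x < f v) :
    (∀ v, f x ≤ f v) ∧ ∀ v, (∀ w, f v ≤ f w) → v = x :=
  ⟨fun v => (eq_or_ne v x).elim (fun hv => hv ▸ le_rfl) fun hv => (h v hv).le,
    fun v hv => by_contra fun hne => (h v hne).not_ge (hv x)⟩

section HardThreshold

variable {E : Type*} [NormedAddCommGroup E]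

lemma norm_sub_sq_add_mul_norm_sq [InnerProductSpace ℝ E] (s v : E) {a : ℝ} (ha : a ≠ 0) :
    ‖v - s‖ ^ 2 + (a - 1) * ‖v‖ ^ 2 = a * ‖v - a⁻¹ • s‖ ^ 2 + (1 - a⁻¹) * ‖s‖ ^ 2 := by
  rw [norm_sub_sq_real, norm_sub_sq_real, norm_smul, inner_smul_right, Real.norm_eq_abs,
    mul_pow, sq_abs]
  field_simp
  ring

def hardThresholdObjective [DecidableEq E] (s : E) (μ c : ℝ) (v : E) : ℝ :=
  ‖v - s‖ ^ 2 + μ * ‖v‖ ^ 2 + c * (if v = 0 then 0 else 1)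

variable [DecidableEq E] {s : E} {μ c : ℝ}

@[simp]
lemma hardThresholdObjective_zero : hardThresholdObjective s μ c 0 = ‖s‖ ^ 2 := by
  simp [hardThresholdObjective]

variable [InnerProductSpace ℝ E]

lemma hardThresholdObjective_of_ne_zero (hμ : 1 + μ ≠ 0) {v : E} (hv : v ≠ 0) :
    hardThresholdObjective s μ c v =
      (1 + μ) * ‖v - (1 + μ)⁻¹ • s‖ ^ 2 + ((1 - (1 + μ)⁻¹) * ‖s‖ ^ 2 + c) := by
  have h := norm_sub_sq_add_mul_norm_sq s v hμ
  rw [add_sub_cancel_left] at h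
  rw [hardThresholdObjective, if_neg hv, mul_one, h, add_assoc]

lemma hardThresholdObjective_shrink_lt (hμ : 0 < 1 + μ) (hs : s ≠ 0)
    (hthr : c * (1 + μ) < ‖s‖ ^ 2) {v : E} (hv : v ≠ (1 + μ)⁻¹ • s) :
    hardThresholdObjective s μ c ((1 + μ)⁻¹ • s) < hardThresholdObjective s μ c v := by
  have hx : (1 + μ)⁻¹ • s ≠ 0 := smul_ne_zero (inv_ne_zero hμ.ne') hs
  rw [hardThresholdObjective_of_ne_zero hμ.ne' hx, sub_self, norm_zero, zero_pow two_ne_zero,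
    mul_zero, zero_add]
  rcases eq_or_ne v 0 with rfl | hv0
  · rw [hardThresholdObjective_zero]
    have : c < ‖s‖ ^ 2 / (1 + μ) := (lt_div_iff₀ hμ).mpr hthr
    rw [sub_mul, one_mul, inv_mul_eq_div]
    linarith
  · rw [hardThresholdObjective_of_ne_zero hμ.ne' hv0]
    have : 0 < ‖v - (1 + μ)⁻¹ • s‖ := norm_pos_iff.mpr (sub_ne_zero.mpr hv)
    linarith [mul_pos hμ (pow_pos this 2)]

lemma hardThresholdObjective_zero_lt (hμ : 0 < 1 + μ) (hthr : ‖s‖ ^ 2 < c * (1 + μ)) {v : E}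
    (hv : v ≠ 0) :
    hardThresholdObjective s μ c 0 < hardThresholdObjective s μ c v := by
  rw [hardThresholdObjective_zero, hardThresholdObjective_of_ne_zero hμ.ne' hv]
  have : ‖s‖ ^ 2 / (1 + μ) < c := (div_lt_iff₀ hμ).mpr hthr
  have : 0 ≤ (1 + μ) * ‖v - (1 + μ)⁻¹ • s‖ ^ 2 := by positivity
  rw [sub_mul, one_mul, inv_mul_eq_div]
  linarith

end HardThreshold

theorem scalar_lse_hard_threshold_general (s : ℂ) (κ lam lam0 : ℝ)
    (hκ : 0 < κ) (hlam : 0 < lam)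
    (τ : ℝ) (hτ : τ = Real.sqrt (κ * lam0 * (1 + κ * lam))) :
    let g : ℂ → ℝ := fun v =>
      ‖v - s‖ ^ 2 + κ * lam * ‖v‖ ^ 2 +
        κ * lam0 * (if v = 0 then 0 else 1)
    (‖s‖ > τ →
      (∀ v, g (s / ((1 + κ * lam : ℝ) : ℂ)) ≤ g v) ∧
      (∀ v, (∀ w, g v ≤ g w) → v = s / ((1 + κ * lam : ℝ) : ℂ))) ∧
    (‖s‖ < τ →
      (∀ v, g 0 ≤ g v) ∧ (∀ v, (∀ w, g v ≤ g w) → v = 0)) := by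
  intro g
  have hμ : 0 < 1 + κ * lam := by positivity
  have hshrink : s / ((1 + κ * lam : ℝ) : ℂ) = (1 + κ * lam)⁻¹ • s := by
    rw [Complex.real_smul, Complex.ofReal_inv, div_eq_inv_mul]
  refine ⟨fun hgt => ?_, fun hlt => ?_⟩
  · have hs : 0 < ‖s‖ := (hτ ▸ Real.sqrt_nonneg _).trans_lt hgt
    rw [hτ, gt_iff_lt, Real.sqrt_lt' hs] at hgt
    rw [hshrink]
    exact forall_le_and_eq_of_forall_ne_lt fun v =>
      hardThresholdObjective_shrink_lt hμ (norm_pos_iff.mp hs) hgt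
  · rw [hτ, Real.lt_sqrt (norm_nonneg s)] at hlt
    exact forall_le_and_eq_of_forall_ne_lt fun v => hardThresholdObjective_zero_lt hμ hlt

/-- For `s ∈ ℂ`, `κ, λ, λ₀ > 0` and `τ = √(κλ₀(1+κλ))`, the function
`g(v) = |v − s|² + κλ|v|² + κλ₀·1{v ≠ 0}` on `ℂ` has unique minimizer `s/(1+κλ)` when
`|s| > τ`, and unique minimizer `0` when `|s| < τ`. -/
theorem scalar_lse_hard_threshold (s : ℂ) (κ lam lam0 : ℝ)
    (hκ : 0 < κ) (hlam : 0 < lam) (hlam0 : 0 < lam0)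
    (τ : ℝ) (hτ : τ = Real.sqrt (κ * lam0 * (1 + κ * lam))) :
    let g : ℂ → ℝ := fun v =>
      ‖v - s‖ ^ 2 + κ * lam * ‖v‖ ^ 2 +
        κ * lam0 * (if v = 0 then 0 else 1)
    (‖s‖ > τ →
      (∀ v, g (s / ((1 + κ * lam : ℝ) : ℂ)) ≤ g v) ∧
      (∀ v, (∀ w, g v ≤ g w) → v = s / ((1 + κ * lam : ℝ) : ℂ))) ∧
    (‖s‖ < τ →
      (∀ v, g 0 ≤ g v) ∧ (∀ v, (∀ w, g v ≤ g w) → v = 0)) :=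
  scalar_lse_hard_threshold_general s κ lam lam0 hκ hlam τ hτ
end

section
/- Let s ~ CN(0, λ) with λ > 0, let κ, λₚ, λ₀ > 0, τ = √(κλ₀(1+κλₚ)), and define the hard-thresholded random variable x = s/(1+κλₚ) if |s| ≥ τ and x = 0 if |s| < τ. Then E[|x|²] = ((λ + τ²)/(1+κλₚ)²)·e^{−τ²/λ}. -/
open MeasureTheory ProbabilityTheory

/-- The law of a circularly symmetric complex Gaussian `s = a + b·i` with variance `λ`,
modeled as the product of two real Gaussians `N(0, λ/2)` on the plane `ℝ × ℝ`. -/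
noncomputable def complexGaussian (lam : ℝ) : Measure (ℝ × ℝ) :=
  (gaussianReal 0 (Real.toNNReal (lam / 2))).prod (gaussianReal 0 (Real.toNNReal (lam / 2)))

/-- The complex number corresponding to a point of the plane. -/
noncomputable def toC (p : ℝ × ℝ) : ℂ := (p.1 : ℂ) + (p.2 : ℂ) * Complex.I

open Real Set Filter Topology

/-!
The law `complexGaussian λ` has density `(πλ)⁻¹ e^{-|z|²/λ}` on the plane, and `|x|²` is a function
of `|s|` only, so polar coordinates turn `E|x|²` into
`2π ∫_τ^∞ r · (πλ)⁻¹ e^{-r²/λ} · r²/(1+κλₚ)² dr`.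
The antiderivative of `r³ e^{-r²/λ}` is `-(λ/2)(r² + λ) e^{-r²/λ}`, which gives the closed form.
-/

lemma toC_eq_measurableEquivRealProd_symm : toC = Complex.measurableEquivRealProd.symm := by
  funext p; simp [toC, Complex.ext_iff]

@[fun_prop]
lemma measurable_toC : Measurable toC :=
  toC_eq_measurableEquivRealProd_symm ▸ MeasurableEquiv.measurable _

lemma norm_toC_sq (p : ℝ × ℝ) : ‖toC p‖ ^ 2 = p.1 ^ 2 + p.2 ^ 2 := by
  rw [toC, Complex.sq_norm, Complex.normSq_add_mul_I]

lemma integral_comp_norm_toC {E : Type*} [NormedAddCommGroup E] [NormedSpace ℝ E] (f : ℝ → E) :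
    ∫ p : ℝ × ℝ, f ‖toC p‖ = (2 * π) • ∫ r in Ioi 0, r • f r := by
  rw [toC_eq_measurableEquivRealProd_symm,
    (Complex.volume_preserving_equiv_real_prod.symm).integral_comp
      Complex.measurableEquivRealProd.symm.measurableEmbedding (fun z => f ‖z‖),
    integral_fun_norm_addHaar volume f]
  simp [Complex.finrank_real_complex, Measure.real, mul_smul, two_smul]

lemma gaussianPDFReal_mul_gaussianPDFReal {lam : ℝ} (hlam : 0 < lam) (a b : ℝ) :
    gaussianPDFReal 0 (lam / 2).toNNReal a * gaussianPDFReal 0 (lam / 2).toNNReal b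
      = (π * lam)⁻¹ * exp (-(a ^ 2 + b ^ 2) / lam) := by
  have hv : ((lam / 2).toNNReal : ℝ) = lam / 2 := Real.coe_toNNReal _ (by positivity)
  simp only [gaussianPDFReal, hv, sub_zero]
  rw [mul_mul_mul_comm, ← mul_inv, ← Real.sqrt_mul (by positivity), ← exp_add,
    show 2 * π * (lam / 2) = π * lam by ring, Real.sqrt_mul_self (by positivity)]
  congr 2
  field_simp
  ring

lemma complexGaussian_eq_withDensity {lam : ℝ} (hlam : 0 < lam) :
    complexGaussian lam = volume.withDensity
      (fun p => ENNReal.ofReal ((π * lam)⁻¹ * exp (-‖toC p‖ ^ 2 / lam))) := by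
  have hv : (lam / 2).toNNReal ≠ 0 := by simpa using hlam
  rw [complexGaussian, gaussianReal_of_var_ne_zero _ hv,
    prod_withDensity (measurable_gaussianPDF _ _) (measurable_gaussianPDF _ _),
    ← Measure.volume_eq_prod]
  congr 1
  funext p
  rw [gaussianPDF, gaussianPDF, ← ENNReal.ofReal_mul (gaussianPDFReal_nonneg _ _ _),
    gaussianPDFReal_mul_gaussianPDFReal hlam, norm_toC_sq]

lemma integral_complexGaussian {E : Type*} [NormedAddCommGroup E] [NormedSpace ℝ E]
    {lam : ℝ} (hlam : 0 < lam) (f : ℝ × ℝ → E) :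
    ∫ p, f p ∂complexGaussian lam = ∫ p, ((π * lam)⁻¹ * exp (-‖toC p‖ ^ 2 / lam)) • f p := by
  rw [complexGaussian_eq_withDensity hlam, integral_withDensity_eq_integral_toReal_smul
    (by fun_prop) (ae_of_all _ fun _ => ENNReal.ofReal_lt_top)]
  congr 1
  funext p
  rw [ENNReal.toReal_ofReal (by positivity)]

lemma integral_Ioi_pow_three_mul_exp_neg_sq_div {lam τ : ℝ} (hlam : 0 < lam) (hτ : 0 ≤ τ) :
    ∫ r in Ioi τ, r ^ 3 * exp (-r ^ 2 / lam) = lam / 2 * (τ ^ 2 + lam) * exp (-τ ^ 2 / lam) := by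
  set F : ℝ → ℝ := fun r => -(lam / 2) * (r ^ 2 + lam) * exp (-r ^ 2 / lam)
  have hF : ∀ r ∈ Ici τ, HasDerivAt F (r ^ 3 * exp (-r ^ 2 / lam)) r := by
    intro r _
    have hpoly : HasDerivAt (fun r => r ^ 2 + lam) (2 * r) r := by
      simpa using (hasDerivAt_pow 2 r).add_const lam
    have hexp : HasDerivAt (fun r => -r ^ 2 / lam) (-(2 * r) / lam) r := by
      simpa using (hasDerivAt_pow 2 r).neg.div_const lam
    refine ((hpoly.const_mul (-(lam / 2))).fun_mul hexp.exp).congr_deriv ?_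
    field_simp
    ring
  have hF_top : Tendsto F atTop (𝓝 0) := by
    have hu : Tendsto (fun u : ℝ => -(lam / 2) * (lam * u + lam) * exp (-u)) atTop (𝓝 0) := by
      have := ((tendsto_pow_mul_exp_neg_atTop_nhds_zero 1).const_mul lam).add
        (tendsto_exp_neg_atTop_nhds_zero.const_mul lam) |>.const_mul (-(lam / 2))
      simpa [add_mul, mul_assoc] using this
    convert hu.comp ((tendsto_pow_atTop two_ne_zero).atTop_div_const hlam) using 1
    funext r
    simp [F, mul_div_cancel₀ _ hlam.ne', neg_div]
  have hnonneg : ∀ r ∈ Ioi τ, 0 ≤ r ^ 3 * exp (-r ^ 2 / lam) := fun r hr =>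
    mul_nonneg (pow_nonneg (hτ.trans hr.le) 3) (exp_pos _).le
  rw [integral_Ioi_of_hasDerivAt_of_nonneg' hF hnonneg hF_top]
  simp only [F]
  ring

noncomputable def hardThreshold (τ c : ℝ) (z : ℂ) : ℂ := if τ ≤ ‖z‖ then z / (c : ℂ) else 0

lemma norm_hardThreshold_sq (τ c : ℝ) (z : ℂ) :
    ‖hardThreshold τ c z‖ ^ 2 = if τ ≤ ‖z‖ then ‖z‖ ^ 2 / c ^ 2 else 0 := by
  unfold hardThreshold
  split_ifs <;> simp [div_pow]

theorem integral_norm_hardThreshold_sq_complexGaussian {lam τ : ℝ} (hlam : 0 < lam) (hτ : 0 ≤ τ)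
    (c : ℝ) :
    ∫ p, ‖hardThreshold τ c (toC p)‖ ^ 2 ∂complexGaussian lam
      = (lam + τ ^ 2) / c ^ 2 * exp (-τ ^ 2 / lam) := by
  set k : ℝ → ℝ := fun r => (π * lam)⁻¹ / c ^ 2 * (r ^ 3 * exp (-r ^ 2 / lam))
  have hradial : ∀ r : ℝ, r • ((π * lam)⁻¹ * exp (-r ^ 2 / lam) *
      (if τ ≤ r then r ^ 2 / c ^ 2 else 0)) = (Ici τ).indicator k r := by
    intro r
    by_cases hr : τ ≤ r
    · simp only [smul_eq_mul, if_pos hr, indicator_of_mem (mem_Ici.mpr hr), k]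
      ring
    · simp [hr]
  calc ∫ p, ‖hardThreshold τ c (toC p)‖ ^ 2 ∂complexGaussian lam
      = 2 * π * ∫ r in Ioi 0, (Ici τ).indicator k r := by
        simp_rw [integral_complexGaussian hlam, norm_hardThreshold_sq, smul_eq_mul]
        rw [integral_comp_norm_toC (fun r => (π * lam)⁻¹ * exp (-r ^ 2 / lam) *
          (if τ ≤ r then r ^ 2 / c ^ 2 else 0))]
        simp_rw [hradial, smul_eq_mul]
    _ = 2 * π * ∫ r in Ioi τ, k r := by
        rw [integral_congr_ae (ae_restrict_of_ae
          (indicator_ae_eq_of_ae_eq_set Ioi_ae_eq_Ici.symm)), setIntegral_indicator measurableSet_Ioi,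
          Ioi_inter_Ioi, max_eq_right hτ]
    _ = (lam + τ ^ 2) / c ^ 2 * exp (-τ ^ 2 / lam) := by
        rw [integral_const_mul, integral_Ioi_pow_three_mul_exp_neg_sq_div hlam hτ]
        field_simp
        ring

theorem expectation_sq_hard_thresholded_general (lam κ lamp lam0 τ : ℝ)
    (hlam : 0 < lam)
    (hτ : τ = Real.sqrt (κ * lam0 * (1 + κ * lamp))) :
    let x : ℝ × ℝ → ℂ := fun p =>
      if τ ≤ ‖toC p‖ then toC p / ((1 + κ * lamp : ℝ) : ℂ) else 0
    (∫ p : ℝ × ℝ, ‖x p‖ ^ 2 ∂(complexGaussian lam))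
      = ((lam + τ ^ 2) / (1 + κ * lamp) ^ 2) * Real.exp (-(τ ^ 2) / lam) :=
  integral_norm_hardThreshold_sq_complexGaussian hlam (hτ ▸ Real.sqrt_nonneg _) (1 + κ * lamp)

/-- Let `s ~ CN(0, λ)`, `κ, λₚ, λ₀ > 0`, `τ = √(κλ₀(1+κλₚ))`, and let
`x = s/(1+κλₚ)` if `|s| ≥ τ` and `x = 0` otherwise.  Then
`E[|x|²] = ((λ + τ²)/(1+κλₚ)²)·e^{−τ²/λ}`. -/
theorem expectation_sq_hard_thresholded (lam κ lamp lam0 τ : ℝ)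
    (hlam : 0 < lam) (hκ : 0 < κ) (hlamp : 0 < lamp) (hlam0 : 0 < lam0)
    (hτ : τ = Real.sqrt (κ * lam0 * (1 + κ * lamp))) :
    let x : ℝ × ℝ → ℂ := fun p =>
      if τ ≤ ‖toC p‖ then toC p / ((1 + κ * lamp : ℝ) : ℂ) else 0
    (∫ p : ℝ × ℝ, ‖x p‖ ^ 2 ∂(complexGaussian lam))
      = ((lam + τ ^ 2) / (1 + κ * lamp) ^ 2) * Real.exp (-(τ ^ 2) / lam) :=
  expectation_sq_hard_thresholded_general lam κ lamp lam0 τ hlam hτ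
end

section
/- Let s ∈ ℂ, κ, λ, λ₀ > 0, P > 0. Set τ = √(κλ₀(1+κλ)), τ̃ = (1+κλ)√P, and τ̂ = max{(1+κλ)√P, (1+κλ)√P/2 + κλ₀/(2√P)}. Consider g(v) = |v − s|² + κλ|v|² + κλ₀·1{v ≠ 0} on the disc D = {v ∈ ℂ : |v| ≤ √P}. Then: (i) if |s| < τ, the unique minimizer is v = 0; (ii) if τ < |s| < τ̃, the unique minimizer is v = s/(1+κλ); (iii) if τ̃ ≤ |s| < τ̂, the unique minimizer is v = 0; (iv) if |s| > τ̂, the unique minimizer is v = √P·s/|s|. -/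
/-!
Off `0`, completing the square gives `g v = (1 + κλ) ‖v - c‖² + const` with `c = s / (1 + κλ)`,
so the best nonzero point of the disc is the projection of `c` onto it: `c` itself when
`‖c‖ ≤ √P`, and `√P c / ‖c‖` otherwise, uniquely so because the norm is strictly convex.
Comparing its cost with `g 0 = ‖s‖²` yields the thresholds `τ` and `τ̂`.
-/

def IsUniqueMinOn {α β : Type*} [Preorder β] (f : α → β) (s : Set α) (a : α) : Prop :=
  a ∈ s ∧ (∀ x ∈ s, f a ≤ f x) ∧ ∀ x ∈ s, (∀ y ∈ s, f x ≤ f y) → x = a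

theorem IsUniqueMinOn.of_forall_lt {α β : Type*} [Preorder β] {f : α → β} {s : Set α} {a : α}
    (ha : a ∈ s) (h : ∀ x ∈ s, x ≠ a → f a < f x) : IsUniqueMinOn f s a := by
  refine ⟨ha, fun x hx => ?_, fun x hx hmin => ?_⟩
  · rcases eq_or_ne x a with rfl | hxa
    · exact le_rfl
    · exact (h x hx hxa).le
  · by_contra hxa
    exact (h x hx hxa).not_ge (hmin a ha)

/-- Uniqueness of the metric projection of `c` onto the closed ball of radius `p`. -/
theorem sub_lt_norm_sub_of_ne_smul {E : Type*} [NormedAddCommGroup E] [NormedSpace ℝ E]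
    [StrictConvexSpace ℝ E] {c v : E} {p : ℝ} (hc : c ≠ 0) (hv : ‖v‖ ≤ p)
    (hvc : v ≠ (p / ‖c‖) • c) : ‖c‖ - p < ‖c - v‖ := by
  by_contra! h
  have hvp : ‖v‖ = p := le_antisymm hv (by linarith [norm_sub_norm_le c v])
  have hsum : ‖v + (c - v)‖ = ‖v‖ + ‖c - v‖ := by
    rw [add_sub_cancel]
    exact le_antisymm (norm_le_norm_add_norm_sub' c v) (by linarith)
  have hray : SameRay ℝ v c := by
    simpa using SameRay.rfl.add_right (sameRay_iff_norm_add.2 hsum)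
  have hsmul : p • c = ‖c‖ • v := hvp ▸ sameRay_iff_norm_smul_eq.1 hray
  apply hvc
  rw [div_eq_inv_mul, mul_smul, hsmul, inv_smul_smul₀ (norm_ne_zero_iff.2 hc)]

/-- The objective `g` of the theorem, with `α = κλ` and `μ = κλ₀`. -/
noncomputable def tasCost (s : ℂ) (α μ : ℝ) (v : ℂ) : ℝ :=
  ‖v - s‖ ^ 2 + α * ‖v‖ ^ 2 + μ * (if v = 0 then 0 else 1)

section tasCost

variable {s v : ℂ} {α μ p : ℝ}

theorem tasCost_zero : tasCost s α μ 0 = ‖s‖ ^ 2 := by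
  simp [tasCost]

theorem tasCost_of_ne_zero (hα : 1 + α ≠ 0) (hv : v ≠ 0) :
    tasCost s α μ v =
      (1 + α) * ‖v - s / ((1 + α : ℝ) : ℂ)‖ ^ 2 + α / (1 + α) * ‖s‖ ^ 2 + μ := by
  simp only [tasCost, if_neg hv, mul_one, Complex.sq_norm, Complex.normSq_apply,
    Complex.sub_re, Complex.sub_im, Complex.div_re, Complex.div_im, Complex.ofReal_re,
    Complex.ofReal_im]
  field_simp
  ring

theorem norm_div_one_add (hα : 0 ≤ α) : ‖s / ((1 + α : ℝ) : ℂ)‖ = ‖s‖ / (1 + α) := by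
  rw [norm_div, Complex.norm_real, Real.norm_of_nonneg (by linarith)]

/-- Completing the square around the shrunk point `s / (1 + α)`. -/
theorem tasCost_sub_tasCost_zero (hα : 0 ≤ α) (hv : v ≠ 0) (p : ℝ) :
    tasCost s α μ v - tasCost s α μ 0 =
      (1 + α) * (‖v - s / ((1 + α : ℝ) : ℂ)‖ ^ 2 - (‖s / ((1 + α : ℝ) : ℂ)‖ - p) ^ 2) +
        ((1 + α) * p ^ 2 + μ - 2 * p * ‖s‖) := by
  rw [tasCost_of_ne_zero (by positivity) hv, tasCost_zero, norm_div_one_add hα]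
  field_simp
  ring

theorem isUniqueMinOn_tasCost_zero_of_sq_lt (hα : 0 ≤ α) (hp : 0 ≤ p)
    (hs : ‖s‖ ^ 2 < μ * (1 + α)) : IsUniqueMinOn (tasCost s α μ) {v | ‖v‖ ≤ p} 0 := by
  refine .of_forall_lt (by simpa using hp) fun v _ hv => ?_
  rw [tasCost_of_ne_zero (by positivity) hv, tasCost_zero]
  have hs' : ‖s‖ ^ 2 / (1 + α) < μ := by rwa [div_lt_iff₀ (by positivity)]
  have hsplit : ‖s‖ ^ 2 = ‖s‖ ^ 2 / (1 + α) + α / (1 + α) * ‖s‖ ^ 2 := by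
    field_simp
  nlinarith [norm_nonneg (v - s / ((1 + α : ℝ) : ℂ))]

theorem isUniqueMinOn_tasCost_shrink (hα : 0 ≤ α) (hμ : 0 ≤ μ)
    (h₁ : μ * (1 + α) < ‖s‖ ^ 2) (h₂ : ‖s‖ ≤ (1 + α) * p) :
    IsUniqueMinOn (tasCost s α μ) {v | ‖v‖ ≤ p} (s / ((1 + α : ℝ) : ℂ)) := by
  set c := s / ((1 + α : ℝ) : ℂ)
  have hA : 0 < 1 + α := by linarith
  have hc : c ≠ 0 := by
    refine div_ne_zero (norm_pos_iff.1 ?_) (by exact_mod_cast hA.ne')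
    nlinarith [norm_nonneg s]
  have hcost_c : tasCost s α μ c = α / (1 + α) * ‖s‖ ^ 2 + μ := by
    rw [tasCost_of_ne_zero hA.ne' hc, sub_self, norm_zero]
    ring
  refine .of_forall_lt ?_ fun v _ hvc => ?_
  · show ‖c‖ ≤ p
    rwa [norm_div_one_add hα, div_le_iff₀ hA, mul_comm]
  rw [hcost_c]
  rcases eq_or_ne v 0 with rfl | hv
  · rw [tasCost_zero]
    have hs' : μ < ‖s‖ ^ 2 / (1 + α) := by rwa [lt_div_iff₀ hA]
    have hsplit : ‖s‖ ^ 2 = ‖s‖ ^ 2 / (1 + α) + α / (1 + α) * ‖s‖ ^ 2 := by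
      field_simp
    linarith
  · rw [tasCost_of_ne_zero hA.ne' hv]
    have hdist : 0 < ‖v - c‖ := norm_pos_iff.2 (sub_ne_zero.2 hvc)
    nlinarith

theorem isUniqueMinOn_tasCost_zero_of_le (hα : 0 ≤ α) (hp : 0 ≤ p)
    (h₁ : (1 + α) * p ≤ ‖s‖) (h₂ : 2 * p * ‖s‖ < (1 + α) * p ^ 2 + μ) :
    IsUniqueMinOn (tasCost s α μ) {v | ‖v‖ ≤ p} 0 := by
  set c := s / ((1 + α : ℝ) : ℂ)
  have hA : 0 < 1 + α := by linarith
  refine .of_forall_lt (by simpa using hp) fun v (hvp : ‖v‖ ≤ p) hv => ?_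
  have hcp : 0 ≤ ‖c‖ - p := by
    rwa [sub_nonneg, norm_div_one_add hα, le_div_iff₀ hA, mul_comm]
  have hdist : (‖c‖ - p) ^ 2 ≤ ‖v - c‖ ^ 2 := by
    gcongr
    linarith [norm_sub_norm_le c v, norm_sub_rev c v]
  have hv_cost := tasCost_sub_tasCost_zero (s := s) (μ := μ) hα hv p
  nlinarith

theorem isUniqueMinOn_tasCost_project (hα : 0 ≤ α) (hp : 0 < p)
    (h₁ : (1 + α) * p < ‖s‖) (h₂ : (1 + α) * p ^ 2 + μ < 2 * p * ‖s‖) :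
    IsUniqueMinOn (tasCost s α μ) {v | ‖v‖ ≤ p} ((p : ℂ) * s / ((‖s‖ : ℝ) : ℂ)) := by
  set c := s / ((1 + α : ℝ) : ℂ)
  have hA : 0 < 1 + α := by linarith
  have hs : 0 < ‖s‖ := by nlinarith
  have hc_norm : ‖c‖ = ‖s‖ / (1 + α) := norm_div_one_add hα
  have hpc : p < ‖c‖ := by rwa [hc_norm, lt_div_iff₀ hA, mul_comm]
  have hc : c ≠ 0 := norm_pos_iff.1 (hp.trans hpc)
  have hproj : (p : ℂ) * s / ((‖s‖ : ℝ) : ℂ) = (p / ‖c‖) • c := by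
    have hAC : (1 + α : ℂ) ≠ 0 := by exact_mod_cast hA.ne'
    rw [hc_norm, Complex.real_smul]
    simp only [c]
    push_cast
    field_simp
  have hproj_norm : ‖(p / ‖c‖) • c‖ = p := by
    rw [norm_smul, Real.norm_of_nonneg (by positivity), div_mul_cancel₀ _ (norm_ne_zero_iff.2 hc)]
  have hproj_dist : ‖(p / ‖c‖) • c - c‖ = ‖c‖ - p := by
    rw [show (p / ‖c‖) • c - c = (p / ‖c‖ - 1) • c by rw [sub_smul, one_smul], norm_smul,
      Real.norm_of_nonpos, neg_sub, sub_mul, one_mul, div_mul_cancel₀ _ (norm_ne_zero_iff.2 hc)]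
    rw [sub_nonpos, div_le_one (hp.trans hpc)]
    exact hpc.le
  have hproj_ne : (p / ‖c‖) • c ≠ 0 := norm_pos_iff.1 (by rw [hproj_norm]; exact hp)
  have hproj_cost := tasCost_sub_tasCost_zero (s := s) (μ := μ) hα hproj_ne p
  rw [hproj_dist, sub_self, mul_zero, zero_add] at hproj_cost
  rw [hproj]
  refine .of_forall_lt hproj_norm.le fun v (hvp : ‖v‖ ≤ p) hv₀ => ?_
  rcases eq_or_ne v 0 with rfl | hv
  · linarith
  · have hdist : (‖c‖ - p) ^ 2 < ‖v - c‖ ^ 2 := by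
      gcongr
      rw [norm_sub_rev]
      exact sub_lt_norm_sub_of_ne_smul hc hvp hv₀
    have hv_cost := tasCost_sub_tasCost_zero (s := s) (μ := μ) hα hv p
    nlinarith

end tasCost

/-- Two-step hard thresholding: for `s ∈ ℂ`, `κ, λ, λ₀, P > 0`,
`τ = √(κλ₀(1+κλ))`, `τ̃ = (1+κλ)√P`, `τ̂ = max{(1+κλ)√P, (1+κλ)√P/2 + κλ₀/(2√P)}`,
the function `g(v) = |v − s|² + κλ|v|² + κλ₀·1{v ≠ 0}` on the disc
`D = {v : |v| ≤ √P}` has the unique minimizer: `0` if `|s| < τ`; `s/(1+κλ)` if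
`τ < |s| < τ̃`; `0` if `τ̃ ≤ |s| < τ̂`; and `√P·s/|s|` if `|s| > τ̂`. -/
theorem papr_tas_minimizer (s : ℂ) (κ lam lam0 P τ τt τh : ℝ)
    (hκ : 0 < κ) (hlam : 0 < lam) (hlam0 : 0 < lam0) (hP : 0 < P)
    (hτ : τ = Real.sqrt (κ * lam0 * (1 + κ * lam)))
    (hτt : τt = (1 + κ * lam) * Real.sqrt P)
    (hτh : τh = max ((1 + κ * lam) * Real.sqrt P)
      ((1 + κ * lam) / 2 * Real.sqrt P + κ * lam0 / (2 * Real.sqrt P))) :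
    let g : ℂ → ℝ := fun v =>
      ‖v - s‖ ^ 2 + κ * lam * ‖v‖ ^ 2 +
        κ * lam0 * (if v = 0 then 0 else 1)
    let D : Set ℂ := {v | ‖v‖ ≤ Real.sqrt P}
    let uniqueMinOn : ℂ → Prop := fun v₀ =>
      v₀ ∈ D ∧ (∀ v ∈ D, g v₀ ≤ g v) ∧ (∀ v ∈ D, (∀ w ∈ D, g v ≤ g w) → v = v₀)
    (‖s‖ < τ → uniqueMinOn 0) ∧
    (τ < ‖s‖ → ‖s‖ < τt →
      uniqueMinOn (s / ((1 + κ * lam : ℝ) : ℂ))) ∧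
    (τt ≤ ‖s‖ → ‖s‖ < τh → uniqueMinOn 0) ∧
    (τh < ‖s‖ →
      uniqueMinOn ((Real.sqrt P : ℂ) * s / ((‖s‖ : ℝ) : ℂ))) := by
  intro g D uniqueMinOn
  have hα : 0 ≤ κ * lam := by positivity
  have hp : 0 < Real.sqrt P := Real.sqrt_pos.2 hP
  have hτh' : τh = max ((1 + κ * lam) * Real.sqrt P)
      (((1 + κ * lam) * Real.sqrt P ^ 2 + κ * lam0) / (2 * Real.sqrt P)) := by
    rw [hτh]
    field_simp
  subst hτ hτt
  refine ⟨fun h => ?_, fun h₁ h₂ => ?_, fun h₁ h₂ => ?_, fun h => ?_⟩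
  · exact isUniqueMinOn_tasCost_zero_of_sq_lt hα hp.le ((Real.lt_sqrt (norm_nonneg s)).1 h)
  · have hs : 0 < ‖s‖ := (Real.sqrt_nonneg _).trans_lt h₁
    exact isUniqueMinOn_tasCost_shrink hα (by positivity) ((Real.sqrt_lt' hs).1 h₁) h₂.le
  · rw [hτh', lt_max_iff, or_iff_right h₁.not_gt, lt_div_iff₀ (by positivity)] at h₂
    exact isUniqueMinOn_tasCost_zero_of_le hα hp.le h₁ (by linarith)
  · rw [hτh', max_lt_iff, div_lt_iff₀ (by positivity)] at h
    exact isUniqueMinOn_tasCost_project hα hp h.1 (by linarith)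
end

section
/- Let k, m be positive integers, λ_s > 0, β > 0, let s be a ℂ^k-valued random vector with independent CN(0, λ_s) entries, and let u_1, …, u_m ∈ ℂ^k be fixed vectors. Then E[ Π_{a=1}^m e^{−β‖u_a − s‖²} ] = (1 + λ_s·β·m)^{−k} · exp( −β · Σ_{a=1}^m Σ_{b=1}^m ξ_{ab} · ⟨u_a, u_b⟩ ), where ξ_{ab} = δ_{ab} − λ_s·β/(1 + λ_s·β·m), δ_{ab} is the Kronecker delta, and ⟨u_a, u_b⟩ = u_aᴴ u_b denotes the Hermitian inner product (note Σ_{a,b} ξ_{ab}⟨u_a,u_b⟩ is real). -/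
open MeasureTheory ProbabilityTheory

/-!
Writing `‖u_a − s‖²` coordinatewise, the integrand factors over the `k` coordinates of `s` and,
in each coordinate, over its real and imaginary parts, which are independent `N(0, λ_s/2)`.
Each factor is a one-dimensional Gaussian integral, computed by completing the square:
`∫ exp(−β Σ_a (c_a − x)²) dN(0, v)(x)
  = (1 + 2vβm)^{−1/2} exp(−β (Σ_a c_a² − 2vβ/(1 + 2vβm) (Σ_a c_a)²))`.
Recombining real and imaginary parts gives, per coordinate, the exponent
`−β (Σ_a |u_a|² − λ_sβ/(1 + λ_sβm) |Σ_a u_a|²)`, and this real number is exactly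
`Σ_{a,b} ξ_{ab} ū_a u_b`.
-/

open Real
open scoped NNReal

theorem integral_exp_quadratic {b : ℝ} (hb : b < 0) (c d : ℝ) :
    ∫ x : ℝ, rexp (b * x ^ 2 + c * x + d) = √(π / -b) * rexp (d - c ^ 2 / (4 * b)) := by
  apply Complex.ofReal_injective
  have hsqrt : ((√(π / -b) : ℝ) : ℂ) = ((π / -b : ℝ) : ℂ) ^ (1 / 2 : ℂ) := by
    rw [Real.sqrt_eq_rpow, Complex.ofReal_cpow (div_nonneg pi_pos.le (by linarith))]
    norm_num
  push_cast [← integral_complex_ofReal, hsqrt]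
  exact integral_cexp_quadratic (by simpa using hb) c d

section

variable {ι : Type*} [Fintype ι]

theorem sum_sub_sq (c : ι → ℝ) (x : ℝ) :
    ∑ a, (c a - x) ^ 2 = ∑ a, c a ^ 2 - 2 * (∑ a, c a) * x + Fintype.card ι * x ^ 2 := by
  simp only [sub_sq, Finset.sum_add_distrib, Finset.sum_sub_distrib, ← Finset.sum_mul,
    ← Finset.mul_sum, Finset.sum_const, Finset.card_univ, nsmul_eq_mul]

theorem integral_exp_neg_mul_sum_sub_sq_gaussianReal {v : ℝ≥0} (hv : v ≠ 0) {β : ℝ}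
    (hβ : 0 ≤ β) (c : ι → ℝ) :
    ∫ x, rexp (-β * ∑ a, (c a - x) ^ 2) ∂gaussianReal 0 v
      = (√(1 + 2 * v * β * Fintype.card ι))⁻¹ * rexp (-β * (∑ a, c a ^ 2
          - 2 * v * β / (1 + 2 * v * β * Fintype.card ι) * (∑ a, c a) ^ 2)) := by
  set n : ℝ := (Fintype.card ι : ℝ)
  have ht : 0 < 1 + 2 * v * β * n := by positivity
  have hdensity (x : ℝ) : gaussianPDFReal 0 v x * rexp (-β * ∑ a, (c a - x) ^ 2)
      = (√(2 * π * v))⁻¹ * rexp (-(1 / (2 * v) + β * n) * x ^ 2 + 2 * β * (∑ a, c a) * x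
          + -β * ∑ a, c a ^ 2) := by
    rw [gaussianPDFReal, mul_assoc, ← exp_add, sum_sub_sq]
    congr 2
    field_simp
    ring
  rw [integral_gaussianReal_eq_integral_smul hv]
  simp only [smul_eq_mul, hdensity]
  rw [integral_const_mul, integral_exp_quadratic (by rw [neg_lt_zero]; positivity), ← mul_assoc]
  congr 1
  · rw [neg_neg, show π / (1 / (2 * v) + β * n) = 2 * π * v / (1 + 2 * v * β * n) by
      field_simp, sqrt_div' _ ht.le]
    field_simp
  · congr 1
    field_simp
    ring

open Complex in
theorem normSq_sub_toC (z : ℂ) (p : ℝ × ℝ) :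
    normSq (z - toC p) = (z.re - p.1) ^ 2 + (z.im - p.2) ^ 2 := by
  simp [toC, normSq_apply, sq]

open Complex in
theorem integral_exp_neg_mul_sum_normSq_sub_toC_gaussianReal_prod {v : ℝ≥0} (hv : v ≠ 0)
    {β : ℝ} (hβ : 0 ≤ β) (z : ι → ℂ) :
    ∫ p, rexp (-β * ∑ a, normSq (z a - toC p)) ∂(gaussianReal 0 v).prod (gaussianReal 0 v)
      = (1 + 2 * v * β * Fintype.card ι)⁻¹ * rexp (-β * (∑ a, normSq (z a)
          - 2 * v * β / (1 + 2 * v * β * Fintype.card ι) * normSq (∑ a, z a))) := by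
  have hsplit (p : ℝ × ℝ) : rexp (-β * ∑ a, normSq (z a - toC p))
      = rexp (-β * ∑ a, ((z a).re - p.1) ^ 2) * rexp (-β * ∑ a, ((z a).im - p.2) ^ 2) := by
    simp only [normSq_sub_toC, Finset.sum_add_distrib, ← Real.exp_add, mul_add]
  simp only [hsplit]
  rw [integral_prod_mul (fun x ↦ rexp (-β * ∑ a, ((z a).re - x) ^ 2))
      (fun y ↦ rexp (-β * ∑ a, ((z a).im - y) ^ 2)),
    integral_exp_neg_mul_sum_sub_sq_gaussianReal hv hβ,
    integral_exp_neg_mul_sum_sub_sq_gaussianReal hv hβ, mul_mul_mul_comm, ← mul_inv,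
    mul_self_sqrt (by positivity), ← Real.exp_add]
  congr 2
  simp only [normSq_apply, re_sum, im_sum, Finset.sum_add_distrib, ← sq]
  ring

theorem sum_sum_kronecker_sub_mul_conj_mul [DecidableEq ι] (s : ℝ) (z : ι → ℂ) :
    ∑ a, ∑ b, (((if a = b then 1 else 0) - s : ℝ) : ℂ) * (starRingEnd ℂ (z a) * z b)
      = ((∑ a, Complex.normSq (z a) - s * Complex.normSq (∑ a, z a) : ℝ) : ℂ) := by
  simp only [Complex.ofReal_sub, sub_mul, Finset.sum_sub_distrib, apply_ite, ite_mul,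
    Complex.ofReal_one, Complex.ofReal_zero, one_mul, zero_mul, Finset.sum_ite_eq,
    Finset.mem_univ, if_true, ← Finset.mul_sum, ← Finset.sum_mul, Complex.ofReal_mul,
    Complex.ofReal_sum, Complex.normSq_eq_conj_mul_self, map_sum]

end

theorem gaussian_integration_replicas_general (k m : ℕ)
    (lams β : ℝ) (hls : 0 < lams) (hβ : 0 < β) (u : Fin m → Fin k → ℂ) :
    let μ : Measure (Fin k → ℝ × ℝ) := Measure.pi fun _ =>
      (gaussianReal 0 (Real.toNNReal (lams / 2))).prod
        (gaussianReal 0 (Real.toNNReal (lams / 2)))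
    let ξ : Fin m → Fin m → ℝ := fun a b =>
      (if a = b then 1 else 0) - lams * β / (1 + lams * β * m)
    let S : ℂ := ∑ a : Fin m, ∑ b : Fin m,
      (ξ a b : ℂ) * ∑ i : Fin k, (starRingEnd ℂ) (u a i) * u b i
    (∫ w : Fin k → ℝ × ℝ,
        ∏ a : Fin m,
          Real.exp (-β * ∑ i : Fin k, Complex.normSq (u a i - toC (w i))) ∂μ)
      = ((1 + lams * β * (m : ℝ)) ^ k)⁻¹ * Real.exp (-β * S.re) ∧
    S.im = 0 := by
  intro μ ξ S
  set Q : Fin k → ℝ := fun i ↦ ∑ a, Complex.normSq (u a i)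
    - lams * β / (1 + lams * β * m) * Complex.normSq (∑ a, u a i)
  have hS : S = ((∑ i, Q i : ℝ) : ℂ) := by
    simp only [S, ξ, Q, Finset.mul_sum, Complex.ofReal_sum,
      ← sum_sum_kronecker_sub_mul_conj_mul]
    exact (Finset.sum_congr rfl fun _ _ ↦ Finset.sum_comm).trans Finset.sum_comm
  refine ⟨?_, by rw [hS, Complex.ofReal_im]⟩
  have h2v : 2 * ((lams / 2).toNNReal : ℝ) = lams := by
    rw [Real.coe_toNNReal _ (by positivity)]; ring
  have hv : (lams / 2).toNNReal ≠ 0 := by simpa using hls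
  calc ∫ w, ∏ a, rexp (-β * ∑ i, Complex.normSq (u a i - toC (w i))) ∂μ
      = ∫ w, ∏ i, rexp (-β * ∑ a, Complex.normSq (u a i - toC (w i))) ∂μ := by
        simp only [← Real.exp_sum, ← Finset.mul_sum]
        rw [integral_congr_ae (ae_of_all _ fun w ↦ by rw [Finset.sum_comm])]
    _ = ∏ i : Fin k, ((1 + lams * β * m)⁻¹ * rexp (-β * Q i)) := by
        refine (integral_fintype_prod_eq_prod
          (fun i p ↦ rexp (-β * ∑ a, Complex.normSq (u a i - toC p)))).trans
          (Finset.prod_congr rfl fun i _ ↦ ?_)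
        rw [integral_exp_neg_mul_sum_normSq_sub_toC_gaussianReal_prod hv hβ.le, h2v,
          Fintype.card_fin]
    _ = ((1 + lams * β * m) ^ k)⁻¹ * rexp (-β * S.re) := by
        rw [Finset.prod_mul_distrib, Finset.prod_const, Finset.card_univ, Fintype.card_fin,
          inv_pow, ← Real.exp_sum, ← Finset.mul_sum, hS, Complex.ofReal_re]

/-- Gaussian integration over the data vector: for `s` a `ℂ^k`-valued
random vector with independent `CN(0, λ_s)` entries and fixed `u_1, …, u_m ∈ ℂ^k`,
`E[ Π_a e^{−β‖u_a − s‖²} ] = (1 + λ_s β m)^{−k} · exp(−β Σ_{a,b} ξ_{ab} ⟨u_a, u_b⟩)`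
where `ξ_{ab} = δ_{ab} − λ_s β/(1 + λ_s β m)`, and the double sum
`Σ_{a,b} ξ_{ab} ⟨u_a, u_b⟩` is real. -/
theorem gaussian_integration_replicas (k m : ℕ) (hk : 0 < k) (hm : 0 < m)
    (lams β : ℝ) (hls : 0 < lams) (hβ : 0 < β) (u : Fin m → Fin k → ℂ) :
    let μ : Measure (Fin k → ℝ × ℝ) := Measure.pi fun _ =>
      (gaussianReal 0 (Real.toNNReal (lams / 2))).prod
        (gaussianReal 0 (Real.toNNReal (lams / 2)))
    let ξ : Fin m → Fin m → ℝ := fun a b =>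
      (if a = b then 1 else 0) - lams * β / (1 + lams * β * m)
    let S : ℂ := ∑ a : Fin m, ∑ b : Fin m,
      (ξ a b : ℂ) * ∑ i : Fin k, (starRingEnd ℂ) (u a i) * u b i
    (∫ w : Fin k → ℝ × ℝ,
        ∏ a : Fin m,
          Real.exp (-β * ∑ i : Fin k, Complex.normSq (u a i - toC (w i))) ∂μ)
      = ((1 + lams * β * (m : ℝ)) ^ k)⁻¹ * Real.exp (-β * S.re) ∧
    S.im = 0 :=
  gaussian_integration_replicas_general k m lams β hls hβ u
end
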